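/- arXiv:1210.3353 — 2 statements merged into one kernel-verified Lean document; each statement's English description precedes it below -/
import Mathlib

section
/- Let F be a field of characteristic ≠ 2 and R a simple associative unital F-algebra with an involution * of the first kind, with S ⊊ R, and assume S is not a commutative set (there exist a, b ∈ S with ab ≠ ba). Then the following are equivalent: (1) there exist x, y ∈ S such that xy + yx ≠ 0 and xky ∈ S² for every k ∈ K; (2) S² = R. -/
/-!
Writing `r = σ + κ` with `σ` symmetric and `κ` skew, and using `[S, K] ⊆ S` together with the
Jacobi identity, one sees that `S² = S + [S, S]` is a Lie ideal of `R`. For `x, y` as in (1) and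
`u = xy + yx ≠ 0`, the hypothesis `xKy ⊆ S²` then gives `uR ⊆ S²`, and the Lie ideal property
upgrades this to `RuR ⊆ S²`. Since `R` is simple, the ideal generated by `u` is all of `R`,
so `S² = R`. Conversely, if `S² = R` then `x = y = 1` works because `2 ≠ 0`.
-/

/-- The paper's `S²`. -/
def selfAdjointSq (R : Type*) [Ring R] [StarRing R] : AddSubgroup R :=
  AddSubgroup.closure {z | ∃ a ∈ {r : R | star r = r}, ∃ b ∈ {r : R | star r = r}, z = a * b}

lemma AddSubgroup.eq_top_of_mul_mul_mem {R : Type*} [Ring R] [IsSimpleRing R]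
    (L : AddSubgroup R) {u : R} (hu : u ≠ 0) (h : ∀ a b, a * u * b ∈ L) : L = ⊤ := by
  have hspan : TwoSidedIdeal.span {u} = ⊤ :=
    (eq_bot_or_eq_top _).resolve_left fun hbot ↦
      hu <| (TwoSidedIdeal.mem_bot R).mp (hbot ▸ TwoSidedIdeal.subset_span rfl)
  refine eq_top_iff.mpr fun z _ ↦ ?_
  have hz : z ∈ TwoSidedIdeal.span {u} := hspan ▸ TwoSidedIdeal.mem_top R
  rw [TwoSidedIdeal.mem_span_iff_mem_addSubgroup_closure] at hz
  refine AddSubgroup.closure_le L |>.mpr ?_ hz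
  rintro _ ⟨_, ⟨a, -, _, rfl, rfl⟩, b, -, rfl⟩
  exact h a b

lemma commute_invOf_two {R : Type*} [Ring R] [Invertible (2 : R)] (x : R) :
    Commute (⅟2 : R) x :=
  (Commute.ofNat_left 2 x).invOf_left

section StarRing

attribute [local instance] LieRing.ofAssociativeRing

variable {R : Type*} [Ring R] [StarRing R]

lemma IsSelfAdjoint.lie_of_star_eq_neg {s k : R} (hs : IsSelfAdjoint s) (hk : star k = -k) :
    IsSelfAdjoint ⁅s, k⁆ := by
  rw [isSelfAdjoint_iff, Ring.lie_def, star_sub, star_mul, star_mul, hs.star_eq, hk]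
  noncomm_ring

lemma mul_mem_selfAdjointSq {a b : R} (ha : IsSelfAdjoint a) (hb : IsSelfAdjoint b) :
    a * b ∈ selfAdjointSq R :=
  AddSubgroup.subset_closure ⟨a, ha, b, hb, rfl⟩

lemma IsSelfAdjoint.mem_selfAdjointSq {s : R} (hs : IsSelfAdjoint s) : s ∈ selfAdjointSq R :=
  mul_one s ▸ mul_mem_selfAdjointSq hs (.one R)

lemma star_mem_selfAdjointSq {v : R} (hv : v ∈ selfAdjointSq R) : star v ∈ selfAdjointSq R := by
  induction hv using AddSubgroup.closure_induction with
  | mem z hz =>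
    obtain ⟨a, ha, b, hb, rfl⟩ := hz
    rw [star_mul, ha, hb]
    exact mul_mem_selfAdjointSq hb ha
  | zero => simp
  | add p q _ _ hp hq => simpa using add_mem hp hq
  | neg p _ hp => simpa using neg_mem hp

variable [Invertible (2 : R)]

lemma IsSelfAdjoint.invOf_two_mul {x : R} (hx : IsSelfAdjoint x) : IsSelfAdjoint (⅟2 * x) := by
  rw [isSelfAdjoint_iff, star_mul, (IsSelfAdjoint.ofNat 2).invOf.star_eq, hx.star_eq,
    (commute_invOf_two x).eq]

lemma exists_isSelfAdjoint_add_star_eq_neg (r : R) :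
    ∃ σ κ, IsSelfAdjoint σ ∧ star κ = -κ ∧ σ + κ = r := by
  refine ⟨⅟2 * (r + star r), ⅟2 * (r - star r), (IsSelfAdjoint.add_star_self r).invOf_two_mul,
    ?_, ?_⟩
  · rw [star_mul, (IsSelfAdjoint.ofNat 2).invOf.star_eq, ← (commute_invOf_two _).eq, star_sub,
      star_star, ← mul_neg, neg_sub]
  · rw [← mul_add, show r + star r + (r - star r) = 2 * r by noncomm_ring, invOf_mul_cancel_left]

lemma IsSelfAdjoint.lie_mem_selfAdjointSq {s : R} (hs : IsSelfAdjoint s) (r : R) :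
    ⁅s, r⁆ ∈ selfAdjointSq R := by
  obtain ⟨σ, κ, hσ, hκ, rfl⟩ := exists_isSelfAdjoint_add_star_eq_neg r
  rw [lie_add]
  refine add_mem ?_ (hs.lie_of_star_eq_neg hκ).mem_selfAdjointSq
  exact sub_mem (mul_mem_selfAdjointSq hs hσ) (mul_mem_selfAdjointSq hσ hs)

lemma lie_lie_mem_selfAdjointSq {a b : R} (ha : IsSelfAdjoint a) (hb : IsSelfAdjoint b) (r : R) :
    ⁅⁅a, b⁆, r⁆ ∈ selfAdjointSq R := by
  rw [lie_lie]
  exact sub_mem (ha.lie_mem_selfAdjointSq _) (hb.lie_mem_selfAdjointSq _)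

lemma lie_mem_selfAdjointSq {v : R} (hv : v ∈ selfAdjointSq R) (r : R) :
    ⁅v, r⁆ ∈ selfAdjointSq R := by
  induction hv using AddSubgroup.closure_induction generalizing r with
  | mem z hz =>
    obtain ⟨a, ha, b, hb, rfl⟩ := hz
    have hsplit : a * b = ⅟2 * (a * b + b * a) + ⁅⅟2 * a, b⁆ := by
      rw [Ring.lie_def, ← mul_assoc b, ← (commute_invOf_two b).eq, mul_assoc, mul_assoc, ← mul_sub,
        ← mul_add, show a * b + b * a + (a * b - b * a) = 2 * (a * b) by noncomm_ring,
        invOf_mul_cancel_left]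
    have hab : IsSelfAdjoint (a * b + b * a) := by
      rw [isSelfAdjoint_iff, star_add, star_mul, star_mul, ha, hb, add_comm]
    rw [hsplit, add_lie]
    exact add_mem (hab.invOf_two_mul.lie_mem_selfAdjointSq r)
      (lie_lie_mem_selfAdjointSq (IsSelfAdjoint.invOf_two_mul ha) hb r)
  | zero => simp
  | add p q _ _ hp hq => simpa only [add_lie] using add_mem (hp r) (hq r)
  | neg p _ hp => simpa only [neg_lie] using neg_mem (hp r)

lemma skew_mul_mem_selfAdjointSq {x y k : R} (hx : IsSelfAdjoint x) (hy : IsSelfAdjoint y)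
    (hxKy : ∀ k : R, star k = -k → x * k * y ∈ selfAdjointSq R) (hk : star k = -k) :
    k * (x * y + y * x) ∈ selfAdjointSq R := by
  have hyKx : y * k * x ∈ selfAdjointSq R := by
    have h := star_mem_selfAdjointSq (hxKy k hk)
    rw [star_mul, star_mul, hy.star_eq, hk, hx.star_eq] at h
    simpa [mul_assoc] using neg_mem h
  rw [show k * (x * y + y * x) = (y * k * x - ⁅y, k * x⁆) + (x * k * y - ⁅x, k * y⁆) by
    rw [Ring.lie_def, Ring.lie_def]; noncomm_ring]
  exact add_mem (sub_mem hyKx (hy.lie_mem_selfAdjointSq _))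
    (sub_mem (hxKy k hk) (hx.lie_mem_selfAdjointSq _))

lemma mul_mem_selfAdjointSq_of_skew_mul_mem {u : R} (hu : IsSelfAdjoint u)
    (hK : ∀ k : R, star k = -k → k * u ∈ selfAdjointSq R) (r : R) :
    u * r ∈ selfAdjointSq R := by
  obtain ⟨σ, κ, hσ, hκ, rfl⟩ := exists_isSelfAdjoint_add_star_eq_neg r
  rw [mul_add, show u * κ = κ * u + ⁅u, κ⁆ by rw [Ring.lie_def]; abel]
  exact add_mem (mul_mem_selfAdjointSq hu hσ)
    (add_mem (hK κ hκ) (hu.lie_of_star_eq_neg hκ).mem_selfAdjointSq)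

lemma mul_mul_mem_selfAdjointSq_of_mul_mem {u : R} (h : ∀ r, u * r ∈ selfAdjointSq R)
    (a b : R) : a * u * b ∈ selfAdjointSq R := by
  rw [show a * u * b = u * (b * a) - ⁅u * b, a⁆ by rw [Ring.lie_def]; noncomm_ring]
  exact sub_mem (h _) (lie_mem_selfAdjointSq (h b) a)

theorem selfAdjointSq_eq_top_of_mul_skew_mul_mem [IsSimpleRing R] {x y : R}
    (hx : IsSelfAdjoint x) (hy : IsSelfAdjoint y) (hxy : x * y + y * x ≠ 0)
    (hxKy : ∀ k : R, star k = -k → x * k * y ∈ selfAdjointSq R) : selfAdjointSq R = ⊤ := by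
  have hu : IsSelfAdjoint (x * y + y * x) := by
    rw [isSelfAdjoint_iff, star_add, star_mul, star_mul, hx.star_eq, hy.star_eq, add_comm]
  refine (selfAdjointSq R).eq_top_of_mul_mul_mem hxy (mul_mul_mem_selfAdjointSq_of_mul_mem ?_)
  exact mul_mem_selfAdjointSq_of_skew_mul_mem hu fun k hk ↦ skew_mul_mem_selfAdjointSq hx hy hxKy hk

end StarRing

theorem stmt_11_general (F R : Type*) [Field F] [Ring R] [Algebra F R] [StarRing R]
    [IsSimpleRing R]
    (hchar : (2 : F) ≠ 0) :
    (∃ x ∈ {r : R | star r = r}, ∃ y ∈ {r : R | star r = r},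
      x * y + y * x ≠ 0 ∧
      ∀ k ∈ {r : R | star r = -r}, x * k * y ∈
        AddSubgroup.closure {z : R | ∃ a ∈ {r : R | star r = r},
          ∃ b ∈ {r : R | star r = r}, z = a * b}) ↔
    (AddSubgroup.closure {z : R | ∃ a ∈ {r : R | star r = r},
        ∃ b ∈ {r : R | star r = r}, z = a * b} : Set R) = Set.univ := by
  have : Invertible (2 : R) := by
    have h2 := (IsUnit.mk0 _ hchar).map (algebraMap F R)
    rw [map_ofNat] at h2
    exact h2.invertible
  constructor
  · rintro ⟨x, hx, y, hy, hxy, hxKy⟩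
    exact congrArg SetLike.coe (selfAdjointSq_eq_top_of_mul_skew_mul_mem hx hy hxy hxKy)
  · intro h
    refine ⟨1, star_one R, 1, star_one R, ?_, fun k _ ↦ Set.eq_univ_iff_forall.mp h _⟩
    rw [mul_one, ← two_mul, mul_one]
    exact Invertible.ne_zero 2

/-- Second criterion: there exist `x, y ∈ S` with `xy + yx ≠ 0` and `xKy ⊆ S²`
iff `S² = R`. -/
theorem stmt_11 (F R : Type*) [Field F] [Ring R] [Algebra F R] [StarRing R]
    [IsSimpleRing R]
    (hchar : (2 : F) ≠ 0)
    (hfirst : Set.center R ⊆ {r : R | star r = r})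
    (hproper : {r : R | star r = r} ≠ Set.univ)
    (hnc : ∃ a ∈ {r : R | star r = r}, ∃ b ∈ {r : R | star r = r}, a * b ≠ b * a) :
    (∃ x ∈ {r : R | star r = r}, ∃ y ∈ {r : R | star r = r},
      x * y + y * x ≠ 0 ∧
      ∀ k ∈ {r : R | star r = -r}, x * k * y ∈
        AddSubgroup.closure {z : R | ∃ a ∈ {r : R | star r = r},
          ∃ b ∈ {r : R | star r = r}, z = a * b}) ↔
    (AddSubgroup.closure {z : R | ∃ a ∈ {r : R | star r = r},
        ∃ b ∈ {r : R | star r = r}, z = a * b} : Set R) = Set.univ :=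
  stmt_11_general F R hchar
end

section
/- Let F be a field of characteristic ≠ 2 and R a simple associative unital F-algebra with an involution * of the first kind, with S ⊊ R, and assume S is not a commutative set (there exist a, b ∈ S with ab ≠ ba). Then SKS = R, where SKS is the additive subgroup of R generated by all products aub with a, b ∈ S and u ∈ K. -/
/-!
Write `S` and `K` for the symmetric and skew elements and `T` for the additive span of `S K S`.
As `2` is invertible, every element is `s + k` with `s ∈ S`, `k ∈ K`; also `S K ⊆ T` and
`K S ⊆ T`. The commutator `w = a b - b a` of two symmetric elements is skew, and the identity
`s t v = s (t v + v t) - s v t` gives `w K ⊆ T` and `K w ⊆ T`. For any skew `u` with `u K ⊆ T`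
and `K u ⊆ T`, splitting `x` and `y` into symmetric and skew parts gives `x u y ∈ T`. So `T`
contains the two-sided ideal generated by `w ≠ 0`, which is `R` by simplicity.
-/

def sksSubgroup (R : Type*) [Ring R] [StarRing R] : AddSubgroup R :=
  AddSubgroup.closure {z : R | ∃ a ∈ selfAdjoint R, ∃ u ∈ skewAdjoint R, ∃ b ∈ selfAdjoint R,
    z = a * u * b}

section StarRing

variable {R : Type*} [Ring R] [StarRing R] {a b s t u v : R}

lemma selfAdjoint.mul_sub_mul_mem_skewAdjoint (ha : a ∈ selfAdjoint R)
    (hb : b ∈ selfAdjoint R) : a * b - b * a ∈ skewAdjoint R := by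
  rw [selfAdjoint.mem_iff] at ha hb
  rw [skewAdjoint.mem_iff, star_sub, star_mul, star_mul, ha, hb, neg_sub]

lemma skewAdjoint.mul_add_mul_mem_selfAdjoint (hu : u ∈ skewAdjoint R)
    (hv : v ∈ skewAdjoint R) : u * v + v * u ∈ selfAdjoint R := by
  rw [skewAdjoint.mem_iff] at hu hv
  rw [selfAdjoint.mem_iff, star_add, star_mul, star_mul, hu, hv]
  noncomm_ring

lemma mul_add_mul_mem_skewAdjoint (hs : s ∈ selfAdjoint R) (hv : v ∈ skewAdjoint R) :
    s * v + v * s ∈ skewAdjoint R := by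
  rw [selfAdjoint.mem_iff] at hs
  rw [skewAdjoint.mem_iff] at hv
  rw [skewAdjoint.mem_iff, star_add, star_mul, star_mul, hs, hv]
  noncomm_ring

lemma mul_sub_mul_mem_selfAdjoint (hs : s ∈ selfAdjoint R) (hv : v ∈ skewAdjoint R) :
    s * v - v * s ∈ selfAdjoint R := by
  rw [selfAdjoint.mem_iff] at hs
  rw [skewAdjoint.mem_iff] at hv
  rw [selfAdjoint.mem_iff, star_sub, star_mul, star_mul, hs, hv]
  noncomm_ring

lemma exists_selfAdjoint_add_skewAdjoint [Invertible (2 : R)] (x : R) :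
    ∃ s ∈ selfAdjoint R, ∃ k ∈ skewAdjoint R, x = s + k := by
  have hstar : star (⅟2 : R) = ⅟2 := ((IsSelfAdjoint.invOf_iff 2).2 (.ofNat 2)).star_eq
  have hcomm (y : R) : y * ⅟2 = ⅟2 * y := (Commute.invOf_left (Commute.ofNat_left 2 y)).eq.symm
  refine ⟨⅟2 * (x + star x), ?_, ⅟2 * (x - star x), ?_, ?_⟩
  · rw [selfAdjoint.mem_iff, star_mul, hstar, hcomm, star_add, star_star, add_comm]
  · rw [skewAdjoint.mem_iff, star_mul, hstar, hcomm, star_sub, star_star, ← mul_neg, neg_sub]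
  · rw [← mul_add, add_add_sub_cancel, ← two_mul, invOf_mul_cancel_left]

namespace sksSubgroup

lemma mul_mul_mem (ha : a ∈ selfAdjoint R) (hu : u ∈ skewAdjoint R) (hb : b ∈ selfAdjoint R) :
    a * u * b ∈ sksSubgroup R :=
  AddSubgroup.subset_closure ⟨a, ha, u, hu, b, hb, rfl⟩

lemma selfAdjoint_mul_mem (hs : s ∈ selfAdjoint R) (hu : u ∈ skewAdjoint R) :
    s * u ∈ sksSubgroup R := by
  simpa using mul_mul_mem hs hu (IsSelfAdjoint.one R)

lemma mul_selfAdjoint_mem (hu : u ∈ skewAdjoint R) (hs : s ∈ selfAdjoint R) :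
    u * s ∈ sksSubgroup R := by
  simpa using mul_mul_mem (IsSelfAdjoint.one R) hu hs

lemma selfAdjoint_mul_selfAdjoint_mul_mem (hs : s ∈ selfAdjoint R) (ht : t ∈ selfAdjoint R)
    (hv : v ∈ skewAdjoint R) : s * t * v ∈ sksSubgroup R := by
  rw [show s * t * v = s * (t * v + v * t) - s * v * t by noncomm_ring]
  exact sub_mem (selfAdjoint_mul_mem hs (mul_add_mul_mem_skewAdjoint ht hv)) (mul_mul_mem hs hv ht)

lemma mul_selfAdjoint_mul_selfAdjoint_mem (hv : v ∈ skewAdjoint R) (hs : s ∈ selfAdjoint R)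
    (ht : t ∈ selfAdjoint R) : v * s * t ∈ sksSubgroup R := by
  rw [show v * s * t = (s * v + v * s) * t - s * v * t by noncomm_ring]
  exact sub_mem (mul_selfAdjoint_mem (mul_add_mul_mem_skewAdjoint hs hv) ht) (mul_mul_mem hs hv ht)

lemma commutator_mul_mem (ha : a ∈ selfAdjoint R) (hb : b ∈ selfAdjoint R)
    (hv : v ∈ skewAdjoint R) : (a * b - b * a) * v ∈ sksSubgroup R := by
  rw [sub_mul]
  exact sub_mem (selfAdjoint_mul_selfAdjoint_mul_mem ha hb hv)
    (selfAdjoint_mul_selfAdjoint_mul_mem hb ha hv)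

lemma mul_commutator_mem (ha : a ∈ selfAdjoint R) (hb : b ∈ selfAdjoint R)
    (hv : v ∈ skewAdjoint R) : v * (a * b - b * a) ∈ sksSubgroup R := by
  rw [mul_sub, ← mul_assoc, ← mul_assoc]
  exact sub_mem (mul_selfAdjoint_mul_selfAdjoint_mem hv ha hb)
    (mul_selfAdjoint_mul_selfAdjoint_mem hv hb ha)

variable [Invertible (2 : R)]

lemma mul_mem_of_forall_mul_skewAdjoint_mem (hu : u ∈ skewAdjoint R)
    (hL : ∀ v ∈ skewAdjoint R, u * v ∈ sksSubgroup R) (x : R) : u * x ∈ sksSubgroup R := by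
  obtain ⟨s, hs, k, hk, rfl⟩ := exists_selfAdjoint_add_skewAdjoint x
  rw [mul_add]
  exact add_mem (mul_selfAdjoint_mem hu hs) (hL k hk)

lemma mul_mem_of_forall_skewAdjoint_mul_mem (hu : u ∈ skewAdjoint R)
    (hR : ∀ v ∈ skewAdjoint R, v * u ∈ sksSubgroup R) (x : R) : x * u ∈ sksSubgroup R := by
  obtain ⟨s, hs, k, hk, rfl⟩ := exists_selfAdjoint_add_skewAdjoint x
  rw [add_mul]
  exact add_mem (selfAdjoint_mul_mem hs hu) (hR k hk)

lemma mul_mul_mem_of_forall_skewAdjoint (hu : u ∈ skewAdjoint R)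
    (hL : ∀ v ∈ skewAdjoint R, u * v ∈ sksSubgroup R)
    (hR : ∀ v ∈ skewAdjoint R, v * u ∈ sksSubgroup R) (x y : R) :
    x * u * y ∈ sksSubgroup R := by
  obtain ⟨s₁, hs₁, k₁, hk₁, rfl⟩ := exists_selfAdjoint_add_skewAdjoint x
  obtain ⟨s₂, hs₂, k₂, hk₂, rfl⟩ := exists_selfAdjoint_add_skewAdjoint y
  have hss : s₁ * u * s₂ ∈ sksSubgroup R := mul_mul_mem hs₁ hu hs₂
  have hsk : s₁ * u * k₂ ∈ sksSubgroup R := by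
    rw [show s₁ * u * k₂ = (s₁ * u - u * s₁) * k₂ + u * (s₁ * k₂) by noncomm_ring]
    exact add_mem (selfAdjoint_mul_mem (mul_sub_mul_mem_selfAdjoint hs₁ hu) hk₂)
      (mul_mem_of_forall_mul_skewAdjoint_mem hu hL _)
  have hks : k₁ * u * s₂ ∈ sksSubgroup R := by
    rw [show k₁ * u * s₂ = (k₁ * s₂) * u - k₁ * (s₂ * u - u * s₂) by noncomm_ring]
    exact sub_mem (mul_mem_of_forall_skewAdjoint_mul_mem hu hR _)
      (mul_selfAdjoint_mem hk₁ (mul_sub_mul_mem_selfAdjoint hs₂ hu))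
  have hkk : k₁ * u * k₂ ∈ sksSubgroup R := by
    rw [show k₁ * u * k₂ = (k₁ * u + u * k₁) * k₂ - u * (k₁ * k₂) by noncomm_ring]
    exact sub_mem (selfAdjoint_mul_mem (skewAdjoint.mul_add_mul_mem_selfAdjoint hk₁ hu) hk₂)
      (mul_mem_of_forall_mul_skewAdjoint_mem hu hL _)
  rw [show (s₁ + k₁) * u * (s₂ + k₂) =
      s₁ * u * s₂ + s₁ * u * k₂ + (k₁ * u * s₂ + k₁ * u * k₂) by noncomm_ring]
  exact add_mem (add_mem hss hsk) (add_mem hks hkk)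

end sksSubgroup

end StarRing

namespace AddSubgroup

variable {R : Type*} [Ring R] (T : AddSubgroup R)

/-- The largest two-sided ideal contained in `T`. -/
def twoSidedCore : TwoSidedIdeal R :=
  .mk' {y | ∀ r r' : R, r * y * r' ∈ T} (fun _ _ => by simp)
    (fun hy hz r r' => by simpa [mul_add, add_mul] using add_mem (hy r r') (hz r r'))
    (fun hy r r' => by simpa using neg_mem (hy r r'))
    (fun {a _} hy r r' => by simpa [mul_assoc] using hy (r * a) r')
    (fun {_ a} hy r r' => by simpa [mul_assoc] using hy r (a * r'))

lemma mem_twoSidedCore {y : R} : y ∈ T.twoSidedCore ↔ ∀ r r' : R, r * y * r' ∈ T :=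
  TwoSidedIdeal.mem_mk' _ _ _ _ _ _ y

lemma eq_top_of_mul_mul_mem_s18 [IsSimpleRing R] {x : R} (hx : x ≠ 0)
    (h : ∀ r r' : R, r * x * r' ∈ T) : T = ⊤ := by
  have hcore : T.twoSidedCore = ⊤ := (eq_bot_or_eq_top _).resolve_left fun hbot => hx <| by
    rw [← TwoSidedIdeal.mem_bot, ← hbot, mem_twoSidedCore]
    exact h
  have h1 : (1 : R) ∈ T.twoSidedCore := hcore ▸ TwoSidedIdeal.mem_top R
  refine eq_top_iff.2 fun y _ => ?_
  simpa using T.mem_twoSidedCore.1 h1 y 1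

end AddSubgroup

theorem sksSubgroup.eq_top {R : Type*} [Ring R] [StarRing R] [IsSimpleRing R]
    [Invertible (2 : R)] {a b : R} (ha : a ∈ selfAdjoint R) (hb : b ∈ selfAdjoint R)
    (hab : a * b ≠ b * a) : sksSubgroup R = ⊤ :=
  (sksSubgroup R).eq_top_of_mul_mul_mem_s18 (sub_ne_zero.2 hab)
    (sksSubgroup.mul_mul_mem_of_forall_skewAdjoint (selfAdjoint.mul_sub_mul_mem_skewAdjoint ha hb)
      (fun _ hv => sksSubgroup.commutator_mul_mem ha hb hv)
      (fun _ hv => sksSubgroup.mul_commutator_mem ha hb hv))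

theorem stmt_18_general (F R : Type*) [Field F] [Ring R] [Algebra F R] [StarRing R]
    [IsSimpleRing R]
    (hchar : (2 : F) ≠ 0)
    (hnc : ∃ a ∈ {r : R | star r = r}, ∃ b ∈ {r : R | star r = r}, a * b ≠ b * a) :
    (AddSubgroup.closure {z : R | ∃ a ∈ {r : R | star r = r},
        ∃ u ∈ {r : R | star r = -r}, ∃ b ∈ {r : R | star r = r},
        z = a * u * b} : Set R) = Set.univ := by
  obtain ⟨a, ha, b, hb, hab⟩ := hnc
  have h2 : IsUnit (2 : R) := by
    rw [← map_ofNat (algebraMap F R) 2]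
    exact hchar.isUnit.map _
  let _ : Invertible (2 : R) := h2.invertible
  exact congrArg SetLike.coe (sksSubgroup.eq_top ha hb hab)

/-- If `R` is simple and `S` is not a commutative set, then `SKS = R`. -/
theorem stmt_18 (F R : Type*) [Field F] [Ring R] [Algebra F R] [StarRing R]
    [IsSimpleRing R]
    (hchar : (2 : F) ≠ 0)
    (hfirst : Set.center R ⊆ {r : R | star r = r})
    (hproper : {r : R | star r = r} ≠ Set.univ)
    (hnc : ∃ a ∈ {r : R | star r = r}, ∃ b ∈ {r : R | star r = r}, a * b ≠ b * a) :
    (AddSubgroup.closure {z : R | ∃ a ∈ {r : R | star r = r},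
        ∃ u ∈ {r : R | star r = -r}, ∃ b ∈ {r : R | star r = r},
        z = a * u * b} : Set R) = Set.univ :=
  stmt_18_general F R hchar hnc
end
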